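/- arXiv:2404.01080 — 4 statements merged into one kernel-verified Lean document; each statement's English description precedes it below -/
import Mathlib

section
/- Define the ternary operation f on the set {0,1,2} by: f(x_1,x_2,x_3) = x_1+x_2+x_3 (mod 2) if x_1,x_2,x_3 ∈ {0,1}; f(x_1,x_2,x_3) = 2 if x_1 = x_2 = x_3 = 2; and otherwise f(x_1,x_2,x_3) is the first element among x_1,x_2,x_3 that is different from 2. Then: (i) for every odd m ≥ 3, Clo({f}) contains a WNU operation of arity m; and (ii) for all k,ℓ,j ≥ 1, Clo({f}) contains no operation g of arity k+ℓ+j such that for all x,y,z ∈ {0,1,2}, g is symmetric on the tuple consisting of k copies of x, followed by ℓ copies of y, followed by j copies of z. -/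
namespace ZhukPaper

/-- An `n`-ary operation on a set `A`. -/
abbrev Op (A : Type*) (n : ℕ) : Type _ := (Fin n → A) → A

/-- A functional signature: a type of symbols together with arities. -/
structure Signature where
  symbols : Type
  arity : symbols → ℕ

/-- An algebra over the signature `S` with carrier `A`. -/
structure AlgOn (S : Signature) (A : Type*) where
  op : ∀ s : S.symbols, Op A (S.arity s)

/-- The signature with a single `n`-ary function symbol. -/
def Sig1 (n : ℕ) : Signature := ⟨Unit, fun _ => n⟩

/-- The algebra whose unique basic operation is `w`. -/
def alg1 {A : Type*} {n : ℕ} (w : Op A n) : AlgOn (Sig1 n) A := ⟨fun _ => w⟩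

/-- An operation is idempotent if it returns `x` on the constant tuple `(x,…,x)`. -/
def IsIdem {A : Type*} {n : ℕ} (w : Op A n) : Prop := ∀ a : A, (w fun _ => a) = a

/-- A weak near-unanimity operation:
`w(y,x,…,x) = w(x,y,x,…,x) = … = w(x,…,x,y)` for all `x, y`. -/
def IsWNU {A : Type*} {n : ℕ} (w : Op A n) : Prop :=
  ∀ (x y : A) (i j : Fin n),
    w (Function.update (fun _ => x) i y) = w (Function.update (fun _ => x) j y)

/-- A special idempotent WNU: additionally `w(x,…,x,w(x,…,x,y)) = w(x,…,x,y)`. -/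
def IsSpecialWNU {A : Type*} {n : ℕ} (w : Op A n) : Prop :=
  IsIdem w ∧ IsWNU w ∧
    ∀ (x y : A) (i : Fin n),
      w (Function.update (fun _ => x) i (w (Function.update (fun _ => x) i y))) =
        w (Function.update (fun _ => x) i y)

/-- The clone of term operations of an algebra: the smallest set of finitary operations
containing the basic operations and all projections and closed under composition. -/
inductive Clo {S : Signature} {A : Type*} (α : AlgOn S A) : ∀ {k : ℕ}, Op A k → Prop
  | proj {k : ℕ} (i : Fin k) : Clo α fun x => x i
  | comp {k : ℕ} (s : S.symbols) (h : Fin (S.arity s) → Op A k)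
      (ih : ∀ i, Clo α (h i)) : Clo α fun x => α.op s fun i => h i x

/-- The clone generated by the basic operations together with all constants. -/
inductive PolClo {S : Signature} {A : Type*} (α : AlgOn S A) : ∀ {k : ℕ}, Op A k → Prop
  | proj {k : ℕ} (i : Fin k) : PolClo α fun x => x i
  | const {k : ℕ} (a : A) : PolClo α fun _ : Fin k → A => a
  | comp {k : ℕ} (s : S.symbols) (h : Fin (S.arity s) → Op A k)
      (ih : ∀ i, PolClo α (h i)) : PolClo α fun x => α.op s fun i => h i x

/-- All basic operations are idempotent. -/
def IsIdemAlg {S : Signature} {A : Type*} (α : AlgOn S A) : Prop := ∀ s, IsIdem (α.op s)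

/-- The algebra has a WNU term operation. -/
def HasWNUTerm {S : Signature} {A : Type*} (α : AlgOn S A) : Prop :=
  ∃ n : ℕ, 2 ≤ n ∧ ∃ f : Op A n, Clo α f ∧ IsWNU f

/-- `B` is a subuniverse: closed under all basic operations. -/
def Subuniv {S : Signature} {A : Type*} (α : AlgOn S A) (B : Set A) : Prop :=
  ∀ (s : S.symbols) (t : Fin (S.arity s) → A), (∀ i, t i ∈ B) → α.op s t ∈ B

/-- A binary relation is a subalgebra of the product of two (same-signature) algebras. -/
def Subalg2 {S : Signature} {A B : Type*} (α : AlgOn S A) (β : AlgOn S B)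
    (R : Set (A × B)) : Prop :=
  ∀ (s : S.symbols) (t : Fin (S.arity s) → A × B), (∀ i, t i ∈ R) →
    (α.op s fun i => (t i).1, β.op s fun i => (t i).2) ∈ R

/-- A ternary relation that is a subalgebra of a triple product. -/
def Subalg3 {S : Signature} {A B C : Type*} (α : AlgOn S A) (β : AlgOn S B) (γ : AlgOn S C)
    (R : Set (A × B × C)) : Prop :=
  ∀ (s : S.symbols) (t : Fin (S.arity s) → A × B × C), (∀ i, t i ∈ R) →
    (α.op s fun i => (t i).1, β.op s fun i => (t i).2.1, γ.op s fun i => (t i).2.2) ∈ R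

/-- A 4-ary relation (grouped as pairs of pairs) that is a subalgebra of `A²×B²`. -/
def Subalg4 {S : Signature} {A B : Type*} (α : AlgOn S A) (β : AlgOn S B)
    (δ : Set ((A × A) × (B × B))) : Prop :=
  ∀ (s : S.symbols) (t : Fin (S.arity s) → (A × A) × (B × B)), (∀ i, t i ∈ δ) →
    ((α.op s fun i => (t i).1.1, α.op s fun i => (t i).1.2),
      (β.op s fun i => (t i).2.1, β.op s fun i => (t i).2.2)) ∈ δ

/-- A congruence: an equivalence relation which is a subalgebra of `A × A`. -/
def IsCong {S : Signature} {A : Type*} (α : AlgOn S A) (σ : Set (A × A)) : Prop :=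
  Equivalence (fun a b : A => (a, b) ∈ σ) ∧ Subalg2 α α σ

/-- The first variable of the binary relation `δ` is stable under `σ`. -/
def StableFst {A B : Type*} (σ : Set (A × A)) (δ : Set (A × B)) : Prop :=
  ∀ a b a', (a, b) ∈ δ → (a, a') ∈ σ → (a', b) ∈ δ

/-- The second variable of the binary relation `δ` is stable under `σ`. -/
def StableSnd {A B : Type*} (σ : Set (B × B)) (δ : Set (A × B)) : Prop :=
  ∀ a b b', (a, b) ∈ δ → (b, b') ∈ σ → (a, b') ∈ δ

/-- An irreducible congruence: it cannot be represented as an intersection of binary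
subalgebras of `A × A`, each different from `σ` and stable under `σ`. -/
def IsIrred {S : Signature} {A : Type*} (α : AlgOn S A) (σ : Set (A × A)) : Prop :=
  IsCong α σ ∧
    ¬ ∃ F : Set (Set (A × A)),
        (∀ δ ∈ F, Subalg2 α α δ ∧ StableFst σ δ ∧ StableSnd σ δ ∧ δ ≠ σ) ∧ ⋂₀ F = σ

/-- `σs` is `σ*`: the minimal subalgebra `δ ≤ A×A` with `δ ⊋ σ` and `δ` stable under `σ`. -/
def IsMinCover {S : Signature} {A : Type*} (α : AlgOn S A) (σ σs : Set (A × A)) : Prop :=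
  (Subalg2 α α σs ∧ StableFst σ σs ∧ StableSnd σ σs ∧ σ ⊂ σs) ∧
    ∀ δ : Set (A × A), Subalg2 α α δ → StableFst σ δ → StableSnd σ δ → σ ⊂ δ → σs ⊆ δ

/-- A bridge from the congruence `σ₁` on `A₁` to the congruence `σ₂` on `A₂`. -/
structure IsBridge {S : Signature} {A₁ A₂ : Type*} (α₁ : AlgOn S A₁) (α₂ : AlgOn S A₂)
    (σ₁ : Set (A₁ × A₁)) (σ₂ : Set (A₂ × A₂))
    (δ : Set ((A₁ × A₁) × (A₂ × A₂))) : Prop where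
  subalg : Subalg4 α₁ α₂ δ
  stable1 : ∀ q ∈ δ, ∀ a', (q.1.1, a') ∈ σ₁ → ((a', q.1.2), q.2) ∈ δ
  stable2 : ∀ q ∈ δ, ∀ a', (q.1.2, a') ∈ σ₁ → ((q.1.1, a'), q.2) ∈ δ
  stable3 : ∀ q ∈ δ, ∀ b', (q.2.1, b') ∈ σ₂ → (q.1, (b', q.2.2)) ∈ δ
  stable4 : ∀ q ∈ δ, ∀ b', (q.2.2, b') ∈ σ₂ → (q.1, (q.2.1, b')) ∈ δ
  proj12 : σ₁ ⊂ Prod.fst '' δ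
  proj34 : σ₂ ⊂ Prod.snd '' δ
  congr_iff : ∀ q ∈ δ, (q.1 ∈ σ₁ ↔ q.2 ∈ σ₂)

/-- `δ̃(x,y) = δ(x,x,y,y)`. -/
def tilde {A₁ A₂ : Type*} (δ : Set ((A₁ × A₁) × (A₂ × A₂))) : Set (A₁ × A₂) :=
  {q | ((q.1, q.1), (q.2, q.2)) ∈ δ}

/-- Composition of binary relations. -/
def relComp {A B C : Type*} (R : Set (A × B)) (Q : Set (B × C)) : Set (A × C) :=
  {p | ∃ b, (p.1, b) ∈ R ∧ (b, p.2) ∈ Q}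

/-- The basic operation of the algebra `Z_p`: the sum of `n` elements modulo `p`. -/
def zmodOp (n p : ℕ) : Op (ZMod p) n := fun x => ∑ i, x i

/-- `σ` is a linear congruence with `σ* = σs`. -/
def IsLinearWith {S : Signature} {A : Type*} (α : AlgOn S A) (σ σs : Set (A × A)) : Prop :=
  IsIrred α σ ∧ IsMinCover α σ σs ∧ IsCong α σs ∧
    ∃ p : ℕ, p.Prime ∧
      ∃ SS : Set ((A × A) × (A × A)),
        Subalg4 α α SS ∧
        (∀ q ∈ SS, (q.1.1, q.1.2) ∈ σs ∧ (q.1.1, q.2.1) ∈ σs ∧ (q.1.1, q.2.2) ∈ σs ∧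
            (q.1.2, q.2.1) ∈ σs ∧ (q.1.2, q.2.2) ∈ σs ∧ (q.2.1, q.2.2) ∈ σs) ∧
        ∀ a : A, ∃ (m : ℕ) (φ : {x : A // (a, x) ∈ σs} → Fin m → ZMod p),
          Function.Surjective φ ∧
          (∀ x y, φ x = φ y ↔ ((x : A), (y : A)) ∈ σ) ∧
          ∀ x y z u : {x : A // (a, x) ∈ σs},
            (((x : A), (y : A)), ((z : A), (u : A))) ∈ SS ↔ φ x - φ y = φ z - φ u

/-- A linear congruence. -/
def IsLinearCon {S : Signature} {A : Type*} (α : AlgOn S A) (σ : Set (A × A)) : Prop :=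
  ∃ σs, IsLinearWith α σ σs

/-- A PC congruence: an irreducible congruence that is not linear. -/
def IsPCCon {S : Signature} {A : Type*} (α : AlgOn S A) (σ : Set (A × A)) : Prop :=
  IsIrred α σ ∧ ¬ IsLinearCon α σ

/-- `σ` is a perfect linear congruence (with `σ* = σs`) on the algebra `(A; w)`. -/
def IsPerfLinWith {A : Type*} {n : ℕ} (w : Op A n) (σ σs : Set (A × A)) : Prop :=
  IsIrred (alg1 w) σ ∧ IsMinCover (alg1 w) σ σs ∧
    ∃ p : ℕ, p.Prime ∧
      ∃ ζ : Set (A × A × ZMod p),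
        Subalg3 (alg1 w) (alg1 w) (alg1 (zmodOp n p)) ζ ∧
        {q : A × A | ∃ c, (q.1, q.2, c) ∈ ζ} = σs ∧
        ∀ a b c, (a, b, c) ∈ ζ → ((a, b) ∈ σ ↔ c = 0)

/-- `C` is an absorbing subuniverse of the subalgebra `B`. -/
def IsAbsorbingIn {S : Signature} {A : Type*} (α : AlgOn S A) (C B : Set A) : Prop :=
  C ⊆ B ∧ Subuniv α C ∧
    ∃ (m : ℕ) (t : Op A m), Clo α t ∧
      ∀ (j : Fin m) (x : Fin m → A), (∀ i, i ≠ j → x i ∈ C) → x j ∈ B → t x ∈ C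

/-- `C` is a binary absorbing subuniverse of the subalgebra `B`. -/
def IsBAIn {S : Signature} {A : Type*} (α : AlgOn S A) (C B : Set A) : Prop :=
  C ⊆ B ∧ Subuniv α C ∧
    ∃ t : Op A 2, Clo α t ∧
      ∀ (j : Fin 2) (x : Fin 2 → A), (∀ i, i ≠ j → x i ∈ C) → x j ∈ B → t x ∈ C

/-- The subalgebra of `A × A` generated by a set of pairs. -/
def Sg2 {S : Signature} {A : Type*} (α : AlgOn S A) (X : Set (A × A)) : Set (A × A) :=
  ⋂₀ {R : Set (A × A) | Subalg2 α α R ∧ X ⊆ R}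

/-- `C` is a central subuniverse of the subalgebra `B`. -/
def IsCentralIn {S : Signature} {A : Type*} (α : AlgOn S A) (C B : Set A) : Prop :=
  IsAbsorbingIn α C B ∧
    ∀ a ∈ B, a ∉ C → (a, a) ∉ Sg2 α (({a} : Set A) ×ˢ C ∪ C ×ˢ ({a} : Set A))

/-- `B` is a binary absorbing subuniverse of the whole algebra. -/
def IsBA {S : Signature} {A : Type*} (α : AlgOn S A) (B : Set A) : Prop :=
  IsBAIn α B Set.univ

/-- `C` is a central subuniverse of the whole algebra. -/
def IsCentral {S : Signature} {A : Type*} (α : AlgOn S A) (C : Set A) : Prop :=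
  IsCentralIn α C Set.univ

/-- The algebra has no proper nonempty binary absorbing subuniverse and no
proper nonempty central subuniverse. -/
def BACFree {S : Signature} {A : Type*} (α : AlgOn S A) : Prop :=
  (∀ B : Set A, IsBA α B → B.Nonempty → B = Set.univ) ∧
    ∀ B : Set A, IsCentral α B → B.Nonempty → B = Set.univ

/-- The setoid of a binary relation which is an equivalence relation. -/
def relSetoid {A : Type*} (σ : Set (A × A))
    (h : Equivalence fun a b : A => (a, b) ∈ σ) : Setoid A := ⟨fun a b => (a, b) ∈ σ, h⟩

/-- The setoid induced on a subset `B` by an equivalence relation on `A`. -/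
def relSetoidOn {A : Type*} (σ : Set (A × A))
    (h : Equivalence fun a b : A => (a, b) ∈ σ) (B : Set A) : Setoid B :=
  ⟨fun a b => ((a : A), (b : A)) ∈ σ,
    ⟨fun a => h.refl (a : A), fun hab => h.symm hab, fun hab hbc => h.trans hab hbc⟩⟩

/-- The subalgebra on a subuniverse `B`. -/
def restrictAlg {S : Signature} {A : Type*} (α : AlgOn S A) (B : Set A)
    (hB : Subuniv α B) : AlgOn S B where
  op s t := ⟨α.op s fun i => (t i : A), hB s _ fun i => (t i).2⟩

/-- The quotient algebra modulo a setoid (operations computed on representatives). -/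
noncomputable def quotAlg {S : Signature} {A : Type*} (α : AlgOn S A) (st : Setoid A) :
    AlgOn S (Quotient st) where
  op s t := Quotient.mk st (α.op s fun i => (t i).out)

/-- The six types of (strong) subuniverses: binary absorbing, central, strong,
linear, PC and dividing. -/
inductive SubT : Type
  | BA | Cen | Str | Lin | PC | Div

/-- `C <_{D(σ)}^{A} B`: the dividing-subuniverse relation. -/
def SubRelD {S : Signature} {A : Type*} (α : AlgOn S A) (σ : Set (A × A))
    (C B : Set A) : Prop :=
  Subuniv α B ∧ Subuniv α C ∧ C.Nonempty ∧ C ⊂ B ∧ IsIrred α σ ∧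
    (∃ σs, IsMinCover α σ σs ∧ B ×ˢ B ⊆ σs) ∧
    (∃ a : A, C = B ∩ {x | (a, x) ∈ σ}) ∧
    ∀ (hB : Subuniv α B) (he : Equivalence fun a b : A => (a, b) ∈ σ),
      BACFree (quotAlg (restrictAlg α B hB) (relSetoidOn σ he B))

/-- `C <_{T(σ)}^{A} B`. -/
def SubRel {S : Signature} {A : Type*} (α : AlgOn S A) :
    SubT → Set (A × A) → Set A → Set A → Prop
  | SubT.BA, σ, C0, B0 =>
      Subuniv α B0 ∧ C0.Nonempty ∧ C0 ⊂ B0 ∧ IsBAIn α C0 B0 ∧ σ = Set.univ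
  | SubT.Cen, σ, C0, B0 =>
      Subuniv α B0 ∧ C0.Nonempty ∧ C0 ⊂ B0 ∧ IsCentralIn α C0 B0 ∧ σ = Set.univ
  | SubT.Str, σ, C0, B0 =>
      Subuniv α B0 ∧ Subuniv α C0 ∧ C0.Nonempty ∧ C0 ⊂ B0 ∧
        (∃ D0 : Set A, IsBAIn α D0 B0 ∧ IsCentralIn α D0 B0 ∧ D0 ⊆ C0) ∧ σ = Set.univ
  | SubT.Div, σ, C0, B0 => SubRelD α σ C0 B0
  | SubT.Lin, σ, C0, B0 => SubRelD α σ C0 B0 ∧ IsLinearCon α σ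
  | SubT.PC, σ, C0, B0 => SubRelD α σ C0 B0 ∧ IsPCCon α σ

/-- `C ⋘^{A} B`: a chain of subuniverses of the types BA, central, strong, dividing. -/
inductive Chain {S : Signature} {A : Type*} (α : AlgOn S A) : Set A → Set A → Prop
  | refl (B : Set A) : Chain α B B
  | step {C E B : Set A} (T : SubT) (σ : Set (A × A))
      (hT : T = SubT.BA ∨ T = SubT.Cen ∨ T = SubT.Str ∨ T = SubT.Div)
      (h : SubRel α T σ C E) (hch : Chain α E B) : Chain α C B

/-- `g` is symmetric on the tuple `a`. -/
def SymmOnTuple {A : Type*} {n : ℕ} (g : Op A n) (a : Fin n → A) : Prop :=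
  ∀ π : Equiv.Perm (Fin n), (g fun k => a (π k)) = g a

/-- `g` is XY-symmetric: symmetric on every tuple `(x,…,x,y,…,y)`. -/
def XYSym {A : Type*} {n : ℕ} (g : Op A n) : Prop :=
  ∀ (x y : A) (i : ℕ), SymmOnTuple g fun k => if (k : ℕ) < i then x else y

/-- The coordinatewise operation on a product. -/
def prodOp {A B : Type*} {n : ℕ} (wA : Op A n) (wB : Op B n) : Op (A × B) n :=
  fun x => (wA fun i => (x i).1, wB fun i => (x i).2)

/-- The operation induced on a quotient (computed on representatives). -/
noncomputable def quotOp {A : Type*} {n : ℕ} (w : Op A n) (st : Setoid A) : Op (Quotient st) n :=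
  fun x => Quotient.mk st (w fun i => (x i).out)

/-- Membership in `B ⊠ Z_p`: the first coordinate of the operation is `w_B`, the second
coordinate is `f(x₁⁽¹⁾,…,xₙ⁽¹⁾) + a₁·x₁⁽²⁾ + … + aₙ·xₙ⁽²⁾`. -/
def InBoxProd {B : Type*} {n : ℕ} (wB : Op B n) (p : ℕ) (wA : Op (B × ZMod p) n) : Prop :=
  (∀ x, (wA x).1 = wB fun i => (x i).1) ∧
    ∃ (f : (Fin n → B) → ZMod p) (a : Fin n → ZMod p),
      ∀ x, (wA x).2 = f (fun i => (x i).1) + ∑ i, a i * (x i).2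

/-- An Abelian algebra. -/
def IsAbelian {S : Signature} {A : Type*} (α : AlgOn S A) : Prop :=
  ∀ (n : ℕ) (t : Op A (n + 1)), Clo α t →
    ∀ (x y : A) (u v : Fin n → A),
      t (Fin.cons x u) = t (Fin.cons x v) → t (Fin.cons y u) = t (Fin.cons y v)

/-- A binary relation is linked: the corresponding bipartite graph is connected. -/
def Linked {A B : Type*} (R : Set (A × B)) : Prop :=
  ∀ a a' : A, (∃ b, (a, b) ∈ R) → (∃ b, (a', b) ∈ R) →
    Relation.ReflTransGen (fun x y : A => ∃ b, (x, b) ∈ R ∧ (y, b) ∈ R) a a'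

/-- A polynomially complete algebra. -/
def PolyComplete {S : Signature} {A : Type*} (α : AlgOn S A) : Prop :=
  ∀ (k : ℕ) (g : Op A k), PolClo α g

open Fin.NatCast in
/-- The concrete ternary operation on `{0,1,2}`. -/
def f1 : Op (Fin 3) 3 := fun x =>
  if x 0 ≠ 2 ∧ x 1 ≠ 2 ∧ x 2 ≠ 2 then
    ((((x 0 : ℕ) + (x 1 : ℕ) + (x 2 : ℕ)) % 2 : ℕ) : Fin 3)
  else if x 0 = 2 ∧ x 1 = 2 ∧ x 2 = 2 then 2
  else if x 0 ≠ 2 then x 0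
  else if x 1 ≠ 2 then x 1
  else x 2

/-!
On `{0,1}` the operation `f1` is `x + y + z mod 2`, elsewhere it returns its first argument
different from `2`. It is a special WNU, and for a special ternary WNU `w` the left-nested terms
`w(w(…w(x₁, x₂, x₃)…), x_{m-1}, x_m)` are WNU operations of every odd arity `m ≥ 3`.

For the negative part, every term operation `g` of `f1` has a nonempty set `V` of coordinates
such that `g t = 2` iff `t` is `2` on `V`. Otherwise, on the tuples whose `2`-entries form a
fixed set `P`, `g` is a linear form mod 2 in the entries (`2` counting as `0`) whose
coefficients vanish on `P` and add up to `1`. If `g` is symmetric on a tuple containing both a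
`0` and a `1`, transpositions force all coefficients off `P` to be equal, so the tuple has an odd
number of entries different from `2`. The tuples `1ᵏ0ˡ2ʲ`, `2ᵏ1ˡ0ʲ` and `0ᵏ2ˡ1ʲ` would make
`k + l`, `l + j` and `j + k` all odd.
-/

theorem Clo.minor {S : Signature} {A : Type*} {α : AlgOn S A} {k k' : ℕ} {g : Op A k}
    (hg : Clo α g) (σ : Fin k → Fin k') : Clo α fun x => g (x ∘ σ) := by
  induction hg with
  | proj i => exact Clo.proj (σ i)
  | comp s h _ ih => exact Clo.comp s (fun i x => h i (x ∘ σ)) ih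

section SpecialWNU

variable {A : Type*} {w : Op A 3} {m : ℕ}

theorem clo_alg1_self : Clo (alg1 w) w :=
  Clo.comp () (fun i x => x i) Clo.proj

variable (w) in
def extendByTwo (t : Op A m) : Op A (m + 2) := fun x =>
  w ![t (x ∘ Fin.castAdd 2), x (Fin.natAdd m 0), x (Fin.natAdd m 1)]

theorem Clo.extendByTwo {t : Op A m} (ht : Clo (alg1 w) t) : Clo (alg1 w) (extendByTwo w t) := by
  refine Clo.comp () _ fun i => ?_
  fin_cases i
  · exact ht.minor _
  · exact Clo.proj _
  · exact Clo.proj _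

theorem extendByTwo_update [NeZero m] (hw : IsSpecialWNU w) {t : Op A m}
    (ht : ∀ (a b : A) (i : Fin m),
      t (Function.update (fun _ => a) i b) = w (Function.update (fun _ => a) 0 b))
    (a b : A) (i : Fin (m + 2)) :
    extendByTwo w t (Function.update (fun _ => a) i b) = w (Function.update (fun _ => a) 0 b) := by
  obtain ⟨hidem, hwnu, hspecial⟩ := hw
  refine Fin.addCases (fun i => ?_) (fun k => ?_) i
  · have hinner : Function.update (fun _ => a) (Fin.castAdd 2 i) b ∘ Fin.castAdd 2 =
        Function.update (fun _ => a) i b :=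
      Function.update_comp_eq_of_injective _ (Fin.castAdd_injective _ _) _ _
    have hne (k : Fin 2) : Fin.natAdd m k ≠ Fin.castAdd 2 i := by
      simp only [ne_eq, Fin.ext_iff, Fin.val_natAdd, Fin.val_castAdd]; omega
    have htuple : ![w (Function.update (fun _ => a) 0 b), a, a] =
        Function.update (fun _ => a) 0 (w (Function.update (fun _ => a) 0 b)) := by
      funext k; fin_cases k <;> rfl
    simp only [extendByTwo, hinner, ht, Function.update_of_ne (hne _), htuple, hspecial]
  · have hconst : t (fun _ => a) = a := by
      rw [← Function.update_eq_self 0 (fun _ : Fin m => a), ht, Function.update_eq_self]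
      exact hidem a
    have hinner : Function.update (fun _ => a) (Fin.natAdd m k) b ∘ Fin.castAdd 2 = fun _ => a :=
      Function.update_comp_eq_of_notMem_range _ _ (by simp)
    simp only [extendByTwo, hinner, hconst]
    have htuple : ![a, Function.update (fun _ => a) (Fin.natAdd m k) b (Fin.natAdd m 0),
        Function.update (fun _ => a) (Fin.natAdd m k) b (Fin.natAdd m 1)] =
        Function.update (fun _ => a) k.succ b := by
      funext j; fin_cases j <;> fin_cases k <;> simp [Fin.ext_iff]
    rw [htuple, hwnu a b k.succ 0]

theorem IsSpecialWNU.exists_clo_update_eq (hw : IsSpecialWNU w) (n : ℕ) :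
    ∃ g : Op A (2 * n + 3), Clo (alg1 w) g ∧ ∀ (a b : A) (i : Fin (2 * n + 3)),
      g (Function.update (fun _ => a) i b) = w (Function.update (fun _ => a) 0 b) := by
  induction n with
  | zero => exact ⟨w, clo_alg1_self, fun a b i => hw.2.1 a b i 0⟩
  | succ n ih =>
    obtain ⟨g, hg, hupd⟩ := ih
    have : NeZero (2 * n + 3) := ⟨by omega⟩
    exact ⟨extendByTwo w g, hg.extendByTwo, extendByTwo_update hw hupd⟩

theorem IsSpecialWNU.exists_clo_isWNU (hw : IsSpecialWNU w) (n : ℕ) :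
    ∃ g : Op A (2 * n + 3), Clo (alg1 w) g ∧ IsWNU g := by
  obtain ⟨g, hg, hupd⟩ := hw.exists_clo_update_eq n
  exact ⟨g, hg, fun a b i j => by rw [hupd, hupd]⟩

end SpecialWNU

theorem isSpecialWNU_f1 : IsSpecialWNU f1 := by
  unfold IsSpecialWNU IsIdem IsWNU
  decide

def parity (a : Fin 3) : ZMod 2 := (a : ℕ)

section f1Values

variable {x : Fin 3 → Fin 3}

theorem f1_eq_two_iff : f1 x = 2 ↔ x 0 = 2 ∧ x 1 = 2 ∧ x 2 = 2 := by
  unfold f1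
  generalize x 0 = a, x 1 = b, x 2 = c
  revert a b c
  decide

theorem parity_f1 (h0 : x 0 ≠ 2) (h1 : x 1 ≠ 2) (h2 : x 2 ≠ 2) :
    parity (f1 x) = parity (x 0) + parity (x 1) + parity (x 2) := by
  unfold f1
  generalize x 0 = a, x 1 = b, x 2 = c at *
  revert a b c
  decide

theorem f1_of_ne_two (h0 : x 0 ≠ 2) (h : x 1 = 2 ∨ x 2 = 2) : f1 x = x 0 := by
  unfold f1
  generalize x 0 = a, x 1 = b, x 2 = c at *
  revert a b c
  decide

theorem f1_of_two_of_ne_two (h0 : x 0 = 2) (h1 : x 1 ≠ 2) : f1 x = x 1 := by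
  unfold f1
  generalize x 0 = a, x 1 = b, x 2 = c at *
  revert a b c
  decide

theorem f1_of_two_of_two (h0 : x 0 = 2) (h1 : x 1 = 2) : f1 x = x 2 := by
  unfold f1
  generalize x 0 = a, x 1 = b, x 2 = c at *
  revert a b c
  decide

end f1Values

structure ParityRep {n : ℕ} (g : Op (Fin 3) n) (V : Finset (Fin n)) : Prop where
  nonempty : V.Nonempty
  eq_two_iff : ∀ t, g t = 2 ↔ ↑V ⊆ {i | t i = 2}
  exists_coeff : ∀ P : Set (Fin n), ¬ ↑V ⊆ P → ∃ c : Fin n → ZMod 2,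
    (∀ i ∈ P, c i = 0) ∧ ∑ i, c i = 1 ∧
      ∀ t, {i | t i = 2} = P → parity (g t) = ∑ i, c i * parity (t i)

theorem parityRep_proj {n : ℕ} (i : Fin n) : ParityRep (fun t => t i) {i} where
  nonempty := Finset.singleton_nonempty i
  eq_two_iff t := by simp
  exists_coeff P hP := by
    refine ⟨Pi.single i 1, fun j hj => ?_, by simp, fun t _ => by simp [Pi.single_apply]⟩
    exact Pi.single_eq_of_ne (by rintro rfl; simp_all) _

theorem ParityRep.f1_comp {n : ℕ} {h : Fin 3 → Op (Fin 3) n} {V : Fin 3 → Finset (Fin n)}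
    (hV : ∀ m, ParityRep (h m) (V m)) :
    ParityRep (fun t => f1 fun m => h m t) (V 0 ∪ V 1 ∪ V 2) where
  nonempty := ((hV 0).nonempty.mono Finset.subset_union_left).mono Finset.subset_union_left
  eq_two_iff t := by
    simp only [f1_eq_two_iff, (hV _).eq_two_iff, Finset.coe_union, Set.union_subset_iff, and_assoc]
  exists_coeff P hP := by
    have htwo (m : Fin 3) {t : Fin n → Fin 3} (ht : {i | t i = 2} = P) :
        h m t = 2 ↔ ↑(V m) ⊆ P := by
      rw [(hV m).eq_two_iff, ht]
    simp only [Finset.coe_union, Set.union_subset_iff, not_and_or] at hP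
    by_cases s0 : ↑(V 0) ⊆ P
    · by_cases s1 : ↑(V 1) ⊆ P
      · obtain ⟨c, hcP, hc1, hc⟩ := (hV 2).exists_coeff P (by tauto)
        refine ⟨c, hcP, hc1, fun t ht => ?_⟩
        rw [f1_of_two_of_two ((htwo 0 ht).2 s0) ((htwo 1 ht).2 s1), hc t ht]
      · obtain ⟨c, hcP, hc1, hc⟩ := (hV 1).exists_coeff P s1
        refine ⟨c, hcP, hc1, fun t ht => ?_⟩
        rw [f1_of_two_of_ne_two ((htwo 0 ht).2 s0) (mt (htwo 1 ht).1 s1), hc t ht]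
    · by_cases s12 : ↑(V 1) ⊆ P ∨ ↑(V 2) ⊆ P
      · obtain ⟨c, hcP, hc1, hc⟩ := (hV 0).exists_coeff P s0
        refine ⟨c, hcP, hc1, fun t ht => ?_⟩
        rw [f1_of_ne_two (mt (htwo 0 ht).1 s0) (s12.imp (htwo 1 ht).2 (htwo 2 ht).2), hc t ht]
      · rw [not_or] at s12
        obtain ⟨c₀, hcP₀, hc1₀, hc₀⟩ := (hV 0).exists_coeff P s0
        obtain ⟨c₁, hcP₁, hc1₁, hc₁⟩ := (hV 1).exists_coeff P s12.1
        obtain ⟨c₂, hcP₂, hc1₂, hc₂⟩ := (hV 2).exists_coeff P s12.2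
        refine ⟨c₀ + c₁ + c₂, fun i hi => by simp [hcP₀ i hi, hcP₁ i hi, hcP₂ i hi], ?_,
          fun t ht => ?_⟩
        · simp only [Pi.add_apply, Finset.sum_add_distrib, hc1₀, hc1₁, hc1₂]
          decide
        · rw [parity_f1 (mt (htwo 0 ht).1 s0) (mt (htwo 1 ht).1 s12.1) (mt (htwo 2 ht).1 s12.2),
            hc₀ t ht, hc₁ t ht, hc₂ t ht]
          simp only [Pi.add_apply, add_mul, Finset.sum_add_distrib]

theorem Clo.exists_parityRep {n : ℕ} {g : Op (Fin 3) n} (hg : Clo (alg1 f1) g) :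
    ∃ V, ParityRep g V := by
  induction hg with
  | proj i => exact ⟨_, parityRep_proj i⟩
  | comp _ h _ ih =>
    choose V hV using ih
    exact ⟨_, ParityRep.f1_comp hV⟩

theorem Fintype.sum_mul_comp_swap_sub {ι R : Type*} [Fintype ι] [DecidableEq ι] [CommRing R]
    (c u : ι → R) (p q : ι) :
    ∑ i, c i * u (Equiv.swap p q i) - ∑ i, c i * u i = (c q - c p) * (u p - u q) := by
  rw [← Equiv.sum_comp (Equiv.swap p q) (fun i => c i * u (Equiv.swap p q i)),
    ← Finset.sum_sub_distrib]
  simp only [Equiv.swap_apply_self, ← sub_mul]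
  rcases eq_or_ne p q with rfl | hpq
  · simp
  rw [Fintype.sum_eq_add p q hpq fun i hi => by
    rw [Equiv.swap_apply_of_ne_of_ne hi.1 hi.2, sub_self, zero_mul]]
  simp only [Equiv.swap_apply_left, Equiv.swap_apply_right]
  ring

section Symmetric

variable {n : ℕ} {g : Op (Fin 3) n} {V : Finset (Fin n)} {t : Fin n → Fin 3}

theorem ParityRep.ne_two_of_symmOnTuple (hg : ParityRep g V) (hsym : SymmOnTuple g t) {r : Fin n}
    (hr : t r ≠ 2) : g t ≠ 2 := by
  obtain ⟨v, hv⟩ := hg.nonempty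
  rw [← hsym (Equiv.swap v r), Ne, hg.eq_two_iff]
  intro hsub
  exact hr (by simpa using hsub hv)

theorem ParityRep.sum_ne_two_eq_one (hg : ParityRep g V) (hsym : SymmOnTuple g t) {p q : Fin n}
    (hp : t p = 1) (hq : t q = 0) : ∑ i, (if t i = 2 then 0 else 1 : ZMod 2) = 1 := by
  have hV : ¬ ↑V ⊆ {i | t i = 2} := by
    rw [← hg.eq_two_iff]
    exact hg.ne_two_of_symmOnTuple hsym (r := p) (by simp [hp])
  obtain ⟨c, hcP, hc1, hc⟩ := hg.exists_coeff _ hV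
  have hswap {p q : Fin n} (hp : t p = 1) (hq : t q = 0) : c q = c p := by
    have hset : {i | t (Equiv.swap p q i) = 2} = {i | t i = 2} := by
      ext i
      simp only [Set.mem_ofPred_eq, Equiv.swap_apply_def]
      split_ifs <;> simp_all
    have := Fintype.sum_mul_comp_swap_sub c (parity ∘ t) p q
    simp only [Function.comp_apply] at this
    rw [← hc _ hset, ← hc _ rfl, hsym, sub_self, hp, hq] at this
    simpa [parity, sub_eq_zero] using this.symm
  have hconst (i : Fin n) (hi : t i ≠ 2) : c i = c p := by
    have : t i = 0 ∨ t i = 1 := by omega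
    rcases this with h0 | h1
    · exact hswap hp h0
    · exact (hswap h1 hq).symm.trans (hswap hp hq)
  have hc_eq : c = fun i => c p * (if t i = 2 then 0 else 1) := by
    funext i
    by_cases hi : t i = 2
    · simp [hi, hcP i hi]
    · simp [hi, hconst i hi]
  rw [hc_eq, ← Finset.mul_sum] at hc1
  have hunit : ∀ a b : ZMod 2, a * b = 1 → b = 1 := by decide
  exact hunit _ _ hc1

end Symmetric

/-- `Clo({f})` contains a WNU operation of every odd arity `m ≥ 3`, but
for all `k, l, j ≥ 1` it contains no operation of arity `k + l + j` that is symmetric on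
all tuples consisting of `k` copies of `x`, `l` copies of `y` and `j` copies of `z`. -/
theorem f1_wnu_but_not_xyz_symmetric :
    (∀ m : ℕ, Odd m → 3 ≤ m → ∃ g : Op (Fin 3) m, Clo (alg1 f1) g ∧ IsWNU g) ∧
    ∀ k l j : ℕ, 1 ≤ k → 1 ≤ l → 1 ≤ j →
      ¬ ∃ g : Op (Fin 3) (k + l + j), Clo (alg1 f1) g ∧
          ∀ x y z : Fin 3, SymmOnTuple g fun i =>
            if (i : ℕ) < k then x else if (i : ℕ) < k + l then y else z := by
  refine ⟨fun m hm h3 => ?_, fun k l j hk hl hj => ?_⟩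
  · obtain ⟨n, rfl⟩ : ∃ n, m = 2 * n + 3 := ⟨m / 2 - 1, by obtain ⟨r, rfl⟩ := hm; omega⟩
    exact isSpecialWNU_f1.exists_clo_isWNU n
  rintro ⟨g, hg, hsym⟩
  obtain ⟨V, hV⟩ := hg.exists_parityRep
  set T : Fin 3 → Fin 3 → Fin 3 → Fin (k + l + j) → Fin 3 := fun x y z i =>
    if (i : ℕ) < k then x else if (i : ℕ) < k + l then y else z
  have hA (x y z : Fin 3) : T x y z ⟨0, by omega⟩ = x := if_pos hk
  have hB (x y z : Fin 3) : T x y z ⟨k, by omega⟩ = y :=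
    (if_neg (lt_irrefl k)).trans (if_pos (Nat.lt_add_of_pos_right hl))
  have hC (x y z : Fin 3) : T x y z ⟨k + l, by omega⟩ = z :=
    (if_neg (Nat.not_lt.2 (Nat.le_add_right k l))).trans (if_neg (lt_irrefl _))
  have h102 := hV.sum_ne_two_eq_one (hsym 1 0 2) (hA 1 0 2) (hB 1 0 2)
  have h210 := hV.sum_ne_two_eq_one (hsym 2 1 0) (hB 2 1 0) (hC 2 1 0)
  have h021 := hV.sum_ne_two_eq_one (hsym 0 2 1) (hC 0 2 1) (hA 0 2 1)
  -- every position holds `2` in exactly one of the three tuples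
  have hsum : ∑ i, ((if T 1 0 2 i = 2 then 0 else 1) + (if T 2 1 0 i = 2 then 0 else 1) +
      (if T 0 2 1 i = 2 then 0 else 1) : ZMod 2) = 0 :=
    Finset.sum_eq_zero fun i _ => by simp only [T]; split_ifs <;> first | decide | simp_all
  rw [Finset.sum_add_distrib, Finset.sum_add_distrib, h102, h210, h021] at hsum
  exact absurd hsum (by decide)

end ZhukPaper
end

section
/- Let A = (A; w) ∈ V_n, suppose 0_A is a perfect linear congruence on A witnessed by a prime p and a subalgebra ζ ≤ A×A×Z_p, and suppose 0_A* is a congruence on A. Then there exists an algebra C ∈ (A/0_A* ⊠ Z_p) ∩ V_n and an injective homomorphism h : A → C. -/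
namespace ZhukPaper

section AuxForStatement4

private lemma small_aux {A : Type} {n : ℕ} (hn : n < 2) (w : Op A n) (hid : IsIdem w)
    (R : Set (A × A)) (hd : Set.diagonal A ⊆ R) (t : Fin n → A × A) (ht : ∀ i, t i ∈ R) :
    ((w fun i => (t i).1), (w fun i => (t i).2)) ∈ R := by
  match n, hn, w, hid, t, ht with
  | 0, _, w, hid, t, ht =>
      have h : (fun i : Fin 0 => (t i).1) = (fun i : Fin 0 => (t i).2) :=
        funext fun i => i.elim0
      rw [h]
      exact hd (Set.mem_diagonal _)
  | 1, _, w, hid, t, ht =>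
      have h1 : (w fun i => (t i).1) = (t 0).1 := by
        rw [show (fun i : Fin 1 => (t i).1) = (fun _ : Fin 1 => (t 0).1) from
          funext fun i => by rw [Subsingleton.elim i 0]]
        exact hid _
      have h2 : (w fun i => (t i).2) = (t 0).2 := by
        rw [show (fun i : Fin 1 => (t i).2) = (fun _ : Fin 1 => (t 0).2) from
          funext fun i => by rw [Subsingleton.elim i 0]]
        exact hid _
      rw [h1, h2]
      exact ht 0

private lemma comp_update_apply {I B C : Type*} [DecidableEq I] (g : B → C) (z : B) (i : I)
    (v : B) :
    (fun j => g (Function.update (fun _ => z) i v j)) = Function.update (fun _ => g z) i (g v) := by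
  funext j
  rw [Function.update_apply, Function.update_apply]
  split_ifs <;> rfl

private lemma sum_two {M : Type*} [AddCommMonoid M] {n : ℕ} {i0 i1 : Fin n} (h : i0 ≠ i1)
    (c d : M) :
    (∑ i : Fin n, if i = i0 then c else if i = i1 then d else 0) = c + d := by
  have e : ∀ i : Fin n, (if i = i0 then c else if i = i1 then d else 0)
      = (if i = i0 then c else 0) + (if i = i1 then d else 0) := by
    intro i
    by_cases h0 : i = i0
    · subst h0; simp [h]
    · by_cases h1 : i = i1
      · subst h1; simp [Ne.symm h]
      · simp [h0, h1]
  simp only [e, Finset.sum_add_distrib, Finset.sum_ite_eq', Finset.mem_univ, if_true]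

private lemma ite_update₁ {B : Type*} {n : ℕ} {i0 i1 : Fin n} (h : i0 ≠ i1) (x z : B) :
    (fun i => if i = i0 then x else if i = i1 then z else z) = Function.update (fun _ => z) i0 x := by
  funext i
  rw [Function.update_apply]
  by_cases h0 : i = i0
  · simp [h0]
  · by_cases h1 : i = i1
    · subst h1; simp [h0, Ne.symm h]
    · simp [h0, h1]

private lemma ite_update₂ {B : Type*} {n : ℕ} {i0 i1 : Fin n} (h : i0 ≠ i1) (x z : B) :
    (fun i => if i = i0 then z else if i = i1 then x else z) = Function.update (fun _ => z) i1 x := by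
  funext i
  rw [Function.update_apply]
  by_cases h0 : i = i0
  · subst h0; simp [h, Ne.symm h]
  · by_cases h1 : i = i1 <;> simp [h0, h1, Ne.symm h]

private lemma ite_update₀ {B : Type*} {n : ℕ} (i0 : Fin n) (x z : B) :
    (fun i => if i = i0 then x else z) = Function.update (fun _ => z) i0 x := by
  funext i
  rw [Function.update_apply]

end AuxForStatement4

/-- Let `A = (A; w) ∈ V_n`, suppose `0_A` is a perfect linear congruence,
witnessed by a prime `p` and a subalgebra `ζ ≤ A×A×Z_p`, and suppose `0_A*` is a
congruence. Then there exists an algebra `C ∈ (A/0_A* ⊠ Z_p) ∩ V_n` and an injective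
homomorphism `h : A → C`. -/
theorem embeds_into_box_product {A : Type} [Finite A] {n : ℕ}
    (w : Op A n) (hV : IsSpecialWNU w)
    (σs : Set (A × A))
    (hirr : IsIrred (alg1 w) (Set.diagonal A))
    (hmin : IsMinCover (alg1 w) (Set.diagonal A) σs)
    (hcong : Equivalence fun a b : A => (a, b) ∈ σs)
    (hsubalg : Subalg2 (alg1 w) (alg1 w) σs)
    (p : ℕ) (hp : p.Prime) (ζ : Set (A × A × ZMod p))
    (hζ : Subalg3 (alg1 w) (alg1 w) (alg1 (zmodOp n p)) ζ)
    (hproj : {q : A × A | ∃ c, (q.1, q.2, c) ∈ ζ} = σs)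
    (hzero : ∀ a b (c : ZMod p), (a, b, c) ∈ ζ → (a = b ↔ c = 0)) :
    ∃ wC : Op (Quotient (relSetoid σs hcong) × ZMod p) n,
      InBoxProd (quotOp w (relSetoid σs hcong)) p wC ∧ IsSpecialWNU wC ∧
        ∃ h : A → Quotient (relSetoid σs hcong) × ZMod p,
          Function.Injective h ∧ ∀ t : Fin n → A, h (w t) = wC fun i => h (t i) := by
  classical
  haveI : Fact p.Prime := ⟨hp⟩
  by_cases hn2 : 2 ≤ n
  case neg =>
    exfalso
    apply hirr.2
    by_cases htriv : ∀ a b : A, a = b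
    · refine ⟨∅, fun δ hδ => hδ.elim, ?_⟩
      rw [Set.sInter_empty]
      ext q
      simp only [Set.mem_univ, true_iff, Set.mem_diagonal_iff]
      exact htriv q.1 q.2
    · push_neg at htriv
      obtain ⟨a, b, hab⟩ := htriv
      have key : ∀ q : A × A, q.1 ≠ q.2 →
          Subalg2 (alg1 w) (alg1 w) (Set.diagonal A ∪ {q}) ∧
          StableFst (Set.diagonal A) (Set.diagonal A ∪ {q}) ∧
          StableSnd (Set.diagonal A) (Set.diagonal A ∪ {q}) ∧
          Set.diagonal A ∪ {q} ≠ Set.diagonal A := by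
        intro q hq
        refine ⟨?_, ?_, ?_, ?_⟩
        · intro s t ht
          exact small_aux (by omega) w hV.1 _ Set.subset_union_left t ht
        · intro x y x' hx hxx'
          have hx' : x = x' := hxx'
          rwa [← hx']
        · intro x y y' hx hyy'
          have hy' : y = y' := hyy'
          rwa [← hy']
        · intro hEq
          have hqm : q ∈ Set.diagonal A := hEq ▸ Set.mem_union_right _ rfl
          exact hq hqm
      refine ⟨{Set.diagonal A ∪ {(a, b)}, Set.diagonal A ∪ {(b, a)}}, ?_, ?_⟩
      · intro δ hδ
        rw [Set.mem_insert_iff, Set.mem_singleton_iff] at hδ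
        rcases hδ with h | h
        · rw [h]; exact key (a, b) hab
        · rw [h]; exact key (b, a) (Ne.symm hab)
      · ext q
        rw [Set.mem_sInter]
        constructor
        · intro hmem
          have h1 : q ∈ Set.diagonal A ∪ {(a, b)} := hmem _ (Set.mem_insert _ _)
          have h2 : q ∈ Set.diagonal A ∪ {(b, a)} := hmem _ (Set.mem_insert_of_mem _ rfl)
          rw [Set.mem_union] at h1 h2
          rcases h1 with h1 | h1
          · exact h1
          · rcases h2 with h2 | h2
            · exact h2
            · exfalso
              rw [Set.mem_singleton_iff] at h1 h2
              rw [h1] at h2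
              exact hab (congrArg Prod.fst h2)
        · intro hq δ hδ
          rw [Set.mem_insert_iff, Set.mem_singleton_iff] at hδ
          rcases hδ with rfl | rfl <;> exact Set.mem_union_left _ hq
  case pos =>
    obtain ⟨i0, i1, hi01⟩ : ∃ i0 i1 : Fin n, i0 ≠ i1 :=
      ⟨⟨0, by omega⟩, ⟨1, by omega⟩, by simp [Fin.ext_iff]⟩
    set st := relSetoid σs hcong with hst_def
    -- basic facts
    have hζ' : ∀ T : Fin n → A × A × ZMod p, (∀ i, T i ∈ ζ) →
        ((w fun i => (T i).1), (w fun i => (T i).2.1), ∑ i, (T i).2.2) ∈ ζ :=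
      fun T hT => hζ () T hT
    have hex : ∀ {a b : A}, (a, b) ∈ σs → ∃ c, (a, b, c) ∈ ζ := by
      intro a b hab
      rw [← hproj] at hab
      exact hab
    set χ : A → A → ZMod p := fun a b => if h : ∃ c, (a, b, c) ∈ ζ then h.choose else 0
      with hχ_def
    have memζ : ∀ {a b : A}, (a, b) ∈ σs → (a, b, χ a b) ∈ ζ := by
      intro a b hab
      have h := hex hab
      rw [hχ_def]
      dsimp only
      rw [dif_pos h]
      exact h.choose_spec
    have hdiag : ∀ a : A, (a, a, (0 : ZMod p)) ∈ ζ := by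
      intro a
      obtain ⟨c, hc⟩ := hex (hcong.refl a)
      have h0 : c = 0 := (hzero _ _ _ hc).mp rfl
      rwa [h0] at hc
    have hadd2 : ∀ {a b : A} {c d : ZMod p}, (a, b, c) ∈ ζ → (b, a, d) ∈ ζ → c + d = 0 := by
      intro a b c d h1 h2
      have hT : ∀ i : Fin n,
          (if i = i0 then (a, b, c) else if i = i1 then (b, a, d) else (a, a, 0)) ∈ ζ := by
        intro i
        split_ifs
        exacts [h1, h2, hdiag a]
      have hmem := hζ' _ hT
      have e1 : (fun i : Fin n =>
          (if i = i0 then (a, b, c) else if i = i1 then (b, a, d) else (a, a, (0:ZMod p))).1)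
          = (fun i : Fin n => if i = i0 then a else if i = i1 then b else a) := by
        funext i; split_ifs <;> rfl
      have e2 : (fun i : Fin n =>
          (if i = i0 then (a, b, c) else if i = i1 then (b, a, d) else (a, a, (0:ZMod p))).2.1)
          = (fun i : Fin n => if i = i0 then b else if i = i1 then a else a) := by
        funext i; split_ifs <;> rfl
      have e3 : (fun i : Fin n =>
          (if i = i0 then (a, b, c) else if i = i1 then (b, a, d) else (a, a, (0:ZMod p))).2.2)
          = (fun i : Fin n => if i = i0 then c else if i = i1 then d else 0) := by
        funext i; split_ifs <;> rfl
      rw [e1, e2, e3, sum_two hi01, ite_update₂ hi01, ite_update₁ hi01] at hmem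
      rw [hV.2.1 a b i1 i0] at hmem
      exact (hzero _ _ _ hmem).mp rfl
    have uniq : ∀ {a b : A} {c c' : ZMod p}, (a, b, c) ∈ ζ → (a, b, c') ∈ ζ → c = c' := by
      intro a b c c' h1 h2
      have hab : (a, b) ∈ σs := by rw [← hproj]; exact ⟨c, h1⟩
      obtain ⟨d, hd⟩ := hex (hcong.symm hab)
      have e1 := hadd2 h1 hd
      have e2 := hadd2 h2 hd
      linear_combination e1 - e2
    have χ_eq : ∀ {a b : A} {c : ZMod p}, (a, b, c) ∈ ζ → χ a b = c := by
      intro a b c hc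
      have hab : (a, b) ∈ σs := by rw [← hproj]; exact ⟨c, hc⟩
      exact uniq (memζ hab) hc
    have χ_self : ∀ a : A, χ a a = 0 := fun a => χ_eq (hdiag a)
    have χ_zero : ∀ {a b : A}, (a, b) ∈ σs → (χ a b = 0 ↔ a = b) := by
      intro a b hab
      constructor
      · intro h0
        have := memζ hab
        rw [h0] at this
        exact (hzero _ _ _ this).mpr rfl
      · rintro rfl
        exact χ_self a
    have hAdd : ∀ (s t : Fin n → A), (∀ i, (s i, t i) ∈ σs) →
        (w s, w t) ∈ σs ∧ χ (w s) (w t) = ∑ i, χ (s i) (t i) := by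
      intro s t hstm
      have hmem := hζ' (fun i => (s i, t i, χ (s i) (t i))) (fun i => memζ (hstm i))
      exact ⟨by rw [← hproj]; exact ⟨_, hmem⟩, χ_eq hmem⟩
    have hchain : ∀ {a b c : A}, (a, b) ∈ σs → (b, c) ∈ σs → χ a c = χ a b + χ b c := by
      intro a b c hab hbc
      have hT : ∀ i : Fin n,
          (if i = i0 then (a, b, χ a b) else if i = i1 then (b, c, χ b c) else (b, b, 0)) ∈ ζ := by
        intro i
        split_ifs
        exacts [memζ hab, memζ hbc, hdiag b]
      have hmem := hζ' _ hT
      have e1 : (fun i : Fin n =>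
          (if i = i0 then (a, b, χ a b) else if i = i1 then (b, c, χ b c) else (b, b, (0:ZMod p))).1)
          = (fun i : Fin n => if i = i0 then a else if i = i1 then b else b) := by
        funext i; split_ifs <;> rfl
      have e2 : (fun i : Fin n =>
          (if i = i0 then (a, b, χ a b) else if i = i1 then (b, c, χ b c) else (b, b, (0:ZMod p))).2.1)
          = (fun i : Fin n => if i = i0 then b else if i = i1 then c else b) := by
        funext i; split_ifs <;> rfl
      have e3 : (fun i : Fin n =>
          (if i = i0 then (a, b, χ a b) else if i = i1 then (b, c, χ b c) else (b, b, (0:ZMod p))).2.2)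
          = (fun i : Fin n => if i = i0 then χ a b else if i = i1 then χ b c else 0) := by
        funext i; split_ifs <;> rfl
      rw [e1, e2, e3, sum_two hi01] at hmem
      have e4 : (fun i : Fin n => if i = i0 then b else if i = i1 then b else b)
          = (fun _ : Fin n => b) := by
        funext i; split_ifs <;> rfl
      have hT' : ∀ i : Fin n,
          (if i = i0 then (a, c, χ a c) else (b, b, (0:ZMod p))) ∈ ζ := by
        intro i
        split_ifs
        exacts [memζ (hcong.trans hab hbc), hdiag b]
      have hmem' := hζ' _ hT'
      have e1' : (fun i : Fin n => (if i = i0 then (a, c, χ a c) else (b, b, (0:ZMod p))).1)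
          = (fun i : Fin n => if i = i0 then a else b) := by
        funext i; split_ifs <;> rfl
      have e2' : (fun i : Fin n => (if i = i0 then (a, c, χ a c) else (b, b, (0:ZMod p))).2.1)
          = (fun i : Fin n => if i = i0 then c else b) := by
        funext i; split_ifs <;> rfl
      have e3' : (fun i : Fin n => (if i = i0 then (a, c, χ a c) else (b, b, (0:ZMod p))).2.2)
          = (fun i : Fin n => if i = i0 then χ a c else 0) := by
        funext i; split_ifs <;> rfl
      have e4' : (∑ i : Fin n, if i = i0 then χ a c else (0:ZMod p)) = χ a c := by
        simp [Finset.sum_ite_eq']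
      rw [e1', e2', e3', e4', ite_update₀, ite_update₀] at hmem'
      rw [ite_update₁ hi01, ite_update₂ hi01] at hmem
      rw [hV.2.1 b c i1 i0] at hmem
      exact uniq hmem' hmem
    have hn1 : (n : ZMod p) = 1 := by
      obtain ⟨q, hq, hqd⟩ := Set.exists_of_ssubset hmin.1.2.2.2
      have hq' : q.1 ≠ q.2 := fun h => hqd (by rw [Set.mem_diagonal_iff]; exact h)
      have hmemq : (q.1, q.2) ∈ σs := by rwa [Prod.mk.eta]
      have hch := (hAdd (fun _ => q.1) (fun _ => q.2) (fun _ => hmemq)).2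
      rw [hV.1 q.1, hV.1 q.2] at hch
      rw [Finset.sum_const, Finset.card_univ, Fintype.card_fin] at hch
      have hne0 : χ q.1 q.2 ≠ 0 := fun h => hq' ((χ_zero hmemq).mp h)
      have hmul : (n : ZMod p) * χ q.1 q.2 = 1 * χ q.1 q.2 := by
        rw [one_mul, ← nsmul_eq_mul]
        exact hch.symm
      exact mul_right_cancel₀ hne0 hmul
    -- quotient facts
    have out_rel : ∀ a : A, ((Quotient.mk st a).out, a) ∈ σs := fun a =>
      Quotient.exact (Quotient.out_eq (Quotient.mk st a))
    have mk_eq : ∀ {a b : A}, (a, b) ∈ σs → Quotient.mk st a = Quotient.mk st b :=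
      fun h => Quotient.sound h
    have mk_w : ∀ (s t : Fin n → A), (∀ i, (s i, t i) ∈ σs) →
        Quotient.mk st (w s) = Quotient.mk st (w t) :=
      fun s t h => mk_eq (hAdd s t h).1
    have quotOp_eq : ∀ x : Fin n → Quotient st, quotOp w st x
        = Quotient.mk st (w fun i => (x i).out) := fun x => rfl
    have wB_mk : ∀ t : Fin n → A,
        quotOp w st (fun i => Quotient.mk st (t i)) = Quotient.mk st (w t) := by
      intro t
      rw [quotOp_eq]
      exact mk_w _ _ fun i => out_rel (t i)
    have wB_const : ∀ β : Quotient st, quotOp w st (fun _ => β) = β := by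
      intro β
      rw [quotOp_eq]
      show Quotient.mk st (w fun _ => β.out) = β
      rw [hV.1]
      exact Quotient.out_eq β
    have wB_upd : ∀ (β γ : Quotient st) (i : Fin n),
        quotOp w st (Function.update (fun _ => β) i γ)
          = Quotient.mk st (w (Function.update (fun _ => β.out) i γ.out)) := by
      intro β γ i
      rw [quotOp_eq, comp_update_apply Quotient.out β i γ]
    have sum_const' : ∀ c : ZMod p, (∑ _i : Fin n, c) = c := by
      intro c
      rw [Finset.sum_const, Finset.card_univ, Fintype.card_fin, nsmul_eq_mul, hn1, one_mul]
    have sum_upd : ∀ (c d : ZMod p) (i : Fin n),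
        (∑ j : Fin n, Function.update (fun _ : Fin n => c) i d j) = d := by
      intro c d i
      rw [Finset.sum_update_of_mem (Finset.mem_univ i)]
      have he : (∑ _x ∈ Finset.univ \ {i}, c) = ((n - 1 : ℕ) : ZMod p) * c := by
        rw [Finset.sum_const, Finset.card_sdiff_of_subset (by simp), Finset.card_univ, Fintype.card_fin,
          Finset.card_singleton, nsmul_eq_mul]
      rw [he, Nat.cast_sub (by omega), hn1]
      ring
    set f : (Fin n → Quotient st) → ZMod p :=
      fun β => χ (quotOp w st β).out (w fun i => (β i).out) with hf_def
    have f_upd_eq : ∀ (β γ : Quotient st) (i : Fin n),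
        f (Function.update (fun _ => β) i γ)
          = χ (Quotient.mk st (w (Function.update (fun _ => β.out) i γ.out))).out
              (w (Function.update (fun _ => β.out) i γ.out)) := by
      intro β γ i
      rw [hf_def]
      dsimp only
      rw [wB_upd, comp_update_apply Quotient.out β i γ]
    have hfix_gen : ∀ (q : Quotient st) (g : A) (i : Fin n),
        Quotient.mk st (w (Function.update (fun _ => q.out) i
            (Quotient.mk st (w (Function.update (fun _ => q.out) i g))).out))
          = Quotient.mk st (w (Function.update (fun _ => q.out) i g)) := by
      intro q g i
      have hrel : ((Quotient.mk st (w (Function.update (fun _ => q.out) i g))).out,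
          w (Function.update (fun _ => q.out) i g)) ∈ σs := out_rel _
      have h1 : Quotient.mk st (w (Function.update (fun _ => q.out) i
            (Quotient.mk st (w (Function.update (fun _ => q.out) i g))).out))
          = Quotient.mk st (w (Function.update (fun _ => q.out) i
            (w (Function.update (fun _ => q.out) i g)))) := by
        apply mk_w
        intro k
        rw [Function.update_apply, Function.update_apply]
        split_ifs
        exacts [hrel, hcong.refl _]
      rw [h1, hV.2.2 q.out g i]
    have hf0_gen : ∀ (q : Quotient st) (g : A) (i : Fin n),
        f (Function.update (fun _ => q) i
          (Quotient.mk st (w (Function.update (fun _ => q.out) i g)))) = 0 := by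
      intro q g i
      rw [f_upd_eq, hfix_gen q g i]
      have hrel : ((Quotient.mk st (w (Function.update (fun _ => q.out) i g))).out,
          w (Function.update (fun _ => q.out) i g)) ∈ σs := out_rel _
      have h := hAdd
        (Function.update (fun _ => q.out) i
          (Quotient.mk st (w (Function.update (fun _ => q.out) i g))).out)
        (Function.update (fun _ => q.out) i (w (Function.update (fun _ => q.out) i g)))
        (fun k => by
          rw [Function.update_apply, Function.update_apply]
          split_ifs
          exacts [hrel, hcong.refl _])
      rw [hV.2.2 q.out g i] at h
      have e : ∀ k : Fin n,
          χ (Function.update (fun _ => q.out) i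
              (Quotient.mk st (w (Function.update (fun _ => q.out) i g))).out k)
            (Function.update (fun _ => q.out) i (w (Function.update (fun _ => q.out) i g)) k)
          = Function.update (fun _ : Fin n => (0 : ZMod p)) i
              (χ (Quotient.mk st (w (Function.update (fun _ => q.out) i g))).out
                (w (Function.update (fun _ => q.out) i g))) k := by
        intro k
        rw [Function.update_apply, Function.update_apply, Function.update_apply]
        split_ifs
        · rfl
        · exact (χ_self _).symm ▸ rfl
      rw [Finset.sum_congr rfl (fun k _ => e k), sum_upd] at h
      have h2 : (w (Function.update (fun _ => q.out) i g),
          w (Function.update (fun _ => q.out) i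
            (Quotient.mk st (w (Function.update (fun _ => q.out) i g))).out)) ∈ σs :=
        hcong.symm h.1
      have hc1 := hchain hrel h2
      have hc2 := hchain h2 h.1
      rw [χ_self] at hc2
      linear_combination hc1 - hc2 - h.2
    refine ⟨fun x => (quotOp w st fun i => (x i).1, f (fun i => (x i).1) + ∑ i, (x i).2),
      ⟨fun x => rfl, f, fun _ => 1, fun x => by simp⟩, ?_, ?_⟩
    · -- IsSpecialWNU
      have key : ∀ (x y : Quotient st × ZMod p) (i : Fin n),
          ((quotOp w st fun k => (Function.update (fun _ => x) i y k).1),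
            f (fun k => (Function.update (fun _ => x) i y k).1)
              + ∑ k, (Function.update (fun _ => x) i y k).2)
          = (Quotient.mk st (w (Function.update (fun _ => x.1.out) i y.1.out)),
              f (Function.update (fun _ => x.1) i y.1) + y.2) := by
        intro x y i
        rw [comp_update_apply Prod.fst x i y, comp_update_apply Prod.snd x i y,
          wB_upd, sum_upd]
      refine ⟨?_, ?_, ?_⟩
      · intro x
        dsimp only
        rw [wB_const, sum_const']
        have hfc : f (fun _ : Fin n => x.1) = 0 := by
          rw [hf_def]
          dsimp only
          rw [wB_const]
          show χ x.1.out (w fun _ => x.1.out) = 0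
          rw [hV.1]
          exact χ_self _
        rw [hfc, zero_add]
      · intro x y i j
        dsimp only
        rw [key x y i, key x y j]
        have hfij : f (Function.update (fun _ => x.1) i y.1)
            = f (Function.update (fun _ => x.1) j y.1) := by
          rw [f_upd_eq, f_upd_eq, hV.2.1 x.1.out y.1.out i j]
        rw [hV.2.1 x.1.out y.1.out i j, hfij]
      · intro x y i
        dsimp only
        rw [key x y i]
        rw [key x (Quotient.mk st (w (Function.update (fun _ => x.1.out) i y.1.out)),
              f (Function.update (fun _ => x.1) i y.1) + y.2) i]
        dsimp only
        rw [hfix_gen x.1 y.1.out i, hf0_gen x.1 y.1.out i, zero_add]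
    · -- the embedding
      refine ⟨fun a => (Quotient.mk st a, χ (Quotient.mk st a).out a), ?_, ?_⟩
      · intro a a' hE
        rw [Prod.mk.injEq] at hE
        obtain ⟨h1, h2⟩ := hE
        have hra : ((Quotient.mk st a).out, a) ∈ σs := out_rel a
        have hra' : ((Quotient.mk st a).out, a') ∈ σs := by rw [h1]; exact out_rel a'
        have haa' : (a, a') ∈ σs := hcong.trans (hcong.symm hra) hra'
        have h3 := hchain hra haa'
        rw [← h1] at h2
        rw [← h2] at h3
        have h4 : χ a a' = 0 := by linear_combination -h3
        exact (χ_zero haa').mp h4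
      · intro t
        dsimp only
        refine Prod.ext ?_ ?_
        · exact (wB_mk t).symm
        · show χ (Quotient.mk st (w t)).out (w t)
            = f (fun i => Quotient.mk st (t i)) + ∑ i, χ (Quotient.mk st (t i)).out (t i)
          have hf1 : f (fun i => Quotient.mk st (t i))
              = χ (Quotient.mk st (w t)).out (w fun i => (Quotient.mk st (t i)).out) := by
            rw [hf_def]
            dsimp only
            rw [wB_mk t]
          have hsum := hAdd (fun i => (Quotient.mk st (t i)).out) t (fun i => out_rel (t i))
          have hR : ((Quotient.mk st (w t)).out,
              w fun i => (Quotient.mk st (t i)).out) ∈ σs :=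
            hcong.trans (out_rel (w t)) (hcong.symm hsum.1)
          have hc := hchain hR hsum.1
          rw [hc, hf1, hsum.2]

end ZhukPaper
end

section
/- Let σ be a linear congruence on an algebra A ∈ V_n such that σ* = A². Then the quotient algebra A/σ is isomorphic to Z_p for some prime p. -/
namespace ZhukPaper

lemma aux_sum {V : Type*} [AddCommGroup V] {n : ℕ} (hn : 0 < n) (F : (Fin n → V) → V)
    (F2 : ∀ v v' u u' : Fin n → V, (∀ i, v i - v' i = u i - u' i) → F v - F v' = F u - F u')
    (F3 : ∀ x : V, F (fun _ => x) = x)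
    (Fsym : ∀ (i j : Fin n) (x : V),
      F (Function.update (fun _ => 0) i x) = F (Function.update (fun _ => 0) j x))
    (Fspec : ∀ u : V,
      F (Function.update (fun _ => 0) ⟨0, hn⟩ (F (Function.update (fun _ => 0) ⟨0, hn⟩ u))) =
        F (Function.update (fun _ => 0) ⟨0, hn⟩ u)) :
    ∀ v : Fin n → V, F v = ∑ j, v j := by
  classical
  set i0 : Fin n := ⟨0, hn⟩ with hi0
  set Z : Fin n → V := fun _ => 0 with hZ
  set L : V → V := fun x => F (Function.update Z i0 x) - F Z with hLdef
  have hF0 : F Z = 0 := by rw [hZ]; exact F3 0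
  have hsingle0 : ∀ i : Fin n, Function.update Z i (0 : V) = Z := by
    intro i; funext k; rw [hZ]; simp [Function.update_apply]
  have tele : ∀ s : Finset (Fin n), ∀ v : Fin n → V, (∀ j, j ∉ s → v j = 0) →
      F v = F Z + ∑ j ∈ s, (F (Function.update Z j (v j)) - F Z) := by
    intro s
    induction s using Finset.induction_on with
    | empty =>
      intro v hv
      have hvZ : v = Z := funext fun j => hv j (by simp)
      rw [hvZ]; simp
    | @insert a s ha ih =>
      intro v hv
      have h1 : F v - F (Function.update v a 0) =
          F (Function.update Z a (v a)) - F Z := by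
        apply F2; intro i
        by_cases hi : i = a
        · subst hi; simp [hZ]
        · simp [Function.update_of_ne hi, hZ]
      have h2 := ih (Function.update v a 0) (by
        intro j hj
        by_cases hja : j = a
        · subst hja; simp
        · rw [Function.update_of_ne hja]
          exact hv j (by simp [hja, hj]))
      have h3 : ∑ j ∈ s, (F (Function.update Z j (Function.update v a 0 j)) - F Z)
          = ∑ j ∈ s, (F (Function.update Z j (v j)) - F Z) := by
        apply Finset.sum_congr rfl; intro j hj
        rw [Function.update_of_ne (by rintro rfl; exact ha hj)]
      have h4 := eq_add_of_sub_eq h1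
      rw [h4, h2, h3, Finset.sum_insert ha]
      abel
  have hFsum : ∀ v : Fin n → V, F v = F Z + ∑ j, L (v j) := by
    intro v
    rw [tele Finset.univ v (fun j hj => absurd (Finset.mem_univ j) hj)]
    congr 1
    apply Finset.sum_congr rfl; intro j _
    rw [hLdef]; simp only
    rw [Fsym j i0]
  have hnL : ∀ x : V, n • L x = x := by
    intro x
    have h := hFsum (fun _ => x)
    rw [F3, hF0, zero_add, Finset.sum_const, Finset.card_univ, Fintype.card_fin] at h
    exact h.symm
  have hLinj : Function.Injective L := by
    intro x y hxy
    rw [← hnL x, ← hnL y, hxy]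
  have e : ∀ x, L x = F (Function.update Z i0 x) := by
    intro x; rw [hLdef]; simp [hF0]
  have hLL : ∀ u, L (L u) = L u := by
    intro u
    rw [e (L u), e u]
    exact Fspec u
  have hLid : ∀ x, L x = x := fun x => hLinj (hLL x)
  intro v
  rw [hFsum v, hF0, zero_add]
  exact Finset.sum_congr rfl fun j _ => hLid (v j)

/-- Let `σ` be a linear congruence on `A ∈ V_n` such that `σ* = A²`.
Then `A/σ ≅ Z_p` for some prime `p`. -/
theorem linear_on_top_is_zmod {A : Type} [Finite A] {n : ℕ}
    (w : Op A n) (hV : IsSpecialWNU w)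
    (σ : Set (A × A)) (hlin : IsLinearWith (alg1 w) σ Set.univ) :
    ∃ p : ℕ, p.Prime ∧ ∃ φ : A → ZMod p,
      Function.Surjective φ ∧
      (∀ a b : A, (a, b) ∈ σ ↔ φ a = φ b) ∧
      ∀ t : Fin n → A, φ (w t) = ∑ i, φ (t i) := by
  classical
  obtain ⟨hirr, hmin, hcongs, p, hp, SS, hSSsub, hSSpairs, hφ⟩ := hlin
  haveI : Fact p.Prime := ⟨hp⟩
  -- get a pair not in σ
  obtain ⟨q0, -, hq0⟩ := Set.exists_of_ssubset hmin.1.2.2.2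
  have hq0' : (q0.1, q0.2) ∉ σ := by rwa [Prod.mk.eta]
  -- n is positive
  have hn : 0 < n := by
    rcases Nat.eq_zero_or_pos n with h0 | h; swap
    · exact h
    exfalso
    apply hq0'
    have h12 : q0.1 = q0.2 := by
      subst h0
      calc q0.1 = w (fun _ => q0.1) := (hV.1 q0.1).symm
        _ = w (fun _ => q0.2) := by congr 1; funext i; exact i.elim0
        _ = q0.2 := hV.1 q0.2
    rw [h12]
    exact hirr.1.1.refl q0.2
  -- the map ψ
  obtain ⟨m, φ₀, hsurj₀, hker₀, hSSiff₀⟩ := hφ q0.1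
  set ψ : A → (Fin m → ZMod p) := fun x => φ₀ ⟨x, Set.mem_univ _⟩ with hψdef
  have hsurj : Function.Surjective ψ := by
    intro v
    obtain ⟨x, hx⟩ := hsurj₀ v
    exact ⟨x.1, hx⟩
  have hker : ∀ x y : A, ψ x = ψ y ↔ (x, y) ∈ σ := fun x y =>
    hker₀ ⟨x, Set.mem_univ _⟩ ⟨y, Set.mem_univ _⟩
  have hSSiff : ∀ x y z u : A, ((x, y), (z, u)) ∈ SS ↔ ψ x - ψ y = ψ z - ψ u := fun x y z u =>
    hSSiff₀ ⟨x, Set.mem_univ _⟩ ⟨y, Set.mem_univ _⟩ ⟨z, Set.mem_univ _⟩ ⟨u, Set.mem_univ _⟩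
  -- key closure lemma
  have key : ∀ t s z u : Fin n → A, (∀ i, ψ (t i) - ψ (s i) = ψ (z i) - ψ (u i)) →
      ψ (w t) - ψ (w s) = ψ (w z) - ψ (w u) := by
    intro t s z u h
    have h2 := hSSsub () (fun i => ((t i, s i), (z i, u i)))
      (fun i => (hSSiff _ _ _ _).2 (h i))
    exact (hSSiff _ _ _ _).1 h2
  -- section of ψ
  obtain ⟨g, hg⟩ := hsurj.hasRightInverse
  set F : (Fin n → (Fin m → ZMod p)) → (Fin m → ZMod p) :=
    fun v => ψ (w fun i => g (v i)) with hFdef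
  have F1 : ∀ t : Fin n → A, ψ (w t) = F (fun i => ψ (t i)) := by
    intro t
    have h := key t (fun i => g (ψ (t i))) (fun _ => q0.1) (fun _ => q0.1)
      (fun i => by rw [hg (ψ (t i))]; simp)
    rw [sub_self] at h
    exact sub_eq_zero.mp h
  have F2 : ∀ v v' u u' : Fin n → (Fin m → ZMod p), (∀ i, v i - v' i = u i - u' i) →
      F v - F v' = F u - F u' := by
    intro v v' u u' h
    exact key _ _ _ _ (fun i => by rw [hg, hg, hg, hg]; exact h i)
  have F3 : ∀ x : Fin m → ZMod p, F (fun _ => x) = x := by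
    intro x
    show ψ (w fun _ => g x) = x
    rw [hV.1 (g x)]
    exact hg x
  -- composing ψ with updates
  have comps : ∀ (i : Fin n) (b : A),
      (fun k => ψ (Function.update (fun _ => g 0) i b k)) =
        Function.update (fun _ => (0 : Fin m → ZMod p)) i (ψ b) := by
    intro i b
    funext k
    by_cases hk : k = i
    · subst hk; simp
    · rw [Function.update_of_ne hk, Function.update_of_ne hk]
      exact hg 0
  have e3 : ∀ (i : Fin n) (x : Fin m → ZMod p),
      ψ (w (Function.update (fun _ => g 0) i (g x))) =
        F (Function.update (fun _ => 0) i x) := by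
    intro i x
    rw [F1, comps, hg x]
  have Fsym : ∀ (i j : Fin n) (x : Fin m → ZMod p),
      F (Function.update (fun _ => 0) i x) = F (Function.update (fun _ => 0) j x) := by
    intro i j x
    rw [← e3 i x, ← e3 j x]
    exact congrArg ψ (hV.2.1 (g 0) (g x) i j)
  have Fspec : ∀ u : Fin m → ZMod p,
      F (Function.update (fun _ => 0) ⟨0, hn⟩ (F (Function.update (fun _ => 0) ⟨0, hn⟩ u))) =
        F (Function.update (fun _ => 0) ⟨0, hn⟩ u) := by
    intro u
    have e2 : ψ (w (Function.update (fun _ => g 0) ⟨0, hn⟩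
        (w (Function.update (fun _ => g 0) ⟨0, hn⟩ (g u))))) =
        F (Function.update (fun _ => 0) ⟨0, hn⟩ (F (Function.update (fun _ => 0) ⟨0, hn⟩ u))) := by
      rw [F1, comps, e3]
    rw [← e2, ← e3]
    exact congrArg ψ (hV.2.2 (g 0) (g u) ⟨0, hn⟩)
  have hF : ∀ v : Fin n → (Fin m → ZMod p), F v = ∑ j, v j := aux_sum hn F F2 F3 Fsym Fspec
  have hom : ∀ t : Fin n → A, ψ (w t) = ∑ i, ψ (t i) := by
    intro t
    rw [F1 t, hF]
  -- m must be 1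
  rcases m with _ | _ | m
  · -- m = 0 : σ = univ, contradiction
    exfalso
    apply hq0'
    rw [← hker]
    funext j
    exact j.elim0
  · -- m = 1 : done
    refine ⟨p, hp, fun x => ψ x 0, ?_, ?_, ?_⟩
    · intro c
      obtain ⟨x, hx⟩ := hsurj (fun _ => c)
      exact ⟨x, congrFun hx 0⟩
    · intro x y
      rw [← hker]
      constructor
      · intro h
        exact congrFun h 0
      · intro h
        funext j
        have hj0 : j = 0 := by omega
        rw [hj0]
        exact h
    · intro t
      show ψ (w t) 0 = ∑ i, ψ (t i) 0
      rw [congrFun (hom t) 0, Finset.sum_apply]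
  · -- m ≥ 2 : contradicts irreducibility
    exfalso
    apply hirr.2
    refine ⟨{δ | ∃ j : Fin (m + 2), δ = {q : A × A | ψ q.1 j = ψ q.2 j}}, ?_, ?_⟩
    · rintro δ ⟨j, rfl⟩
      refine ⟨?_, ?_, ?_, ?_⟩
      · intro s t ht
        show ψ (w fun i => (t i).1) j = ψ (w fun i => (t i).2) j
        rw [hom, hom, Finset.sum_apply, Finset.sum_apply]
        exact Finset.sum_congr rfl fun i _ => ht i
      · intro a b a' hab haa'
        have h1 : ψ a = ψ a' := (hker a a').2 haa'
        show ψ a' j = ψ b j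
        rw [← h1]; exact hab
      · intro a b b' hab hbb'
        have h1 : ψ b = ψ b' := (hker b b').2 hbb'
        show ψ a j = ψ b' j
        rw [← h1]; exact hab
      · -- δ_j ≠ σ
        intro hEq
        obtain ⟨j', hj'⟩ := exists_ne j
        obtain ⟨x, hx⟩ := hsurj (fun _ => 0)
        obtain ⟨y, hy⟩ := hsurj (Function.update (fun _ => (0 : ZMod p)) j' 1)
        have hmem : (x, y) ∈ {q : A × A | ψ q.1 j = ψ q.2 j} := by
          show ψ x j = ψ y j
          rw [hx, hy, Function.update_of_ne (Ne.symm hj')]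
        rw [hEq] at hmem
        have hxy := (hker x y).2 hmem
        rw [hx, hy] at hxy
        have h1 := congrFun hxy j'
        simp at h1
    · ext q
      constructor
      · intro h
        have hall : ∀ j : Fin (m + 2), ψ q.1 j = ψ q.2 j := fun j =>
          Set.mem_sInter.mp h _ ⟨j, rfl⟩
        have h1 := (hker q.1 q.2).1 (funext hall)
        rwa [Prod.mk.eta] at h1
      · intro h
        apply Set.mem_sInter.mpr
        rintro δ ⟨j, rfl⟩
        show ψ q.1 j = ψ q.2 j
        have h1 : ψ q.1 = ψ q.2 := (hker q.1 q.2).2 (by rwa [Prod.mk.eta])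
        rw [h1]


end ZhukPaper
end

section
/- Let A = (A; w) where A is a finite set and w is an n-ary idempotent operation, and suppose the equality congruence 0_A is a perfect linear congruence on A, witnessed by a prime p and a subalgebra ζ ≤ A×A×Z_p (so that proj_{1,2}(ζ) = 0_A* and every (a_1,a_2,b) ∈ ζ satisfies a_1 = a_2 ⟺ b = 0). Then: (1) for every (a,b) ∈ 0_A* there exists a unique c ∈ Z_p with (a,b,c) ∈ ζ; (2) p divides n−1; (3) w(a,…,a,b,a,…,a) = b for every (a,b) ∈ 0_A* and any position of b; (4) for every a ∈ A and c ∈ Z_p there exists at most one b ∈ A with (a,b,c) ∈ ζ; (5) for every b ∈ A and c ∈ Z_p there exists at most one a ∈ A with (a,b,c) ∈ ζ; (6) if (a,b,d) ∈ ζ and (b,c,e) ∈ ζ then (a,c,d+e) ∈ ζ. -/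
namespace ZhukPaper

section ZetaAux

variable {M : Type*} [AddCommMonoid M]

lemma sum_ite_one' {n : ℕ} (i : Fin n) (x c : M) :
    (∑ j : Fin n, if j = i then x else c) = x + (n - 1) • c := by
  have h : (fun j : Fin n => if j = i then x else c) = Function.update (fun _ => c) i x := by
    funext t; simp [Function.update_apply]
  rw [h, Finset.sum_update_of_mem (Finset.mem_univ i), Finset.sum_const,
    Finset.sdiff_singleton_eq_erase, Finset.card_erase_of_mem (Finset.mem_univ i),
    Finset.card_univ, Fintype.card_fin]

lemma sum_ite_two' {n : ℕ} (i j : Fin n) (hij : i ≠ j) (x y c : M) :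
    (∑ t : Fin n, if t = i then x else if t = j then y else c) = x + y + (n - 2) • c := by
  have h : (fun t : Fin n => if t = i then x else if t = j then y else c)
      = Function.update (Function.update (fun _ => c) j y) i x := by
    funext t; simp [Function.update_apply]
  have hj : j ∈ Finset.univ.erase i :=
    Finset.mem_erase_of_ne_of_mem (Ne.symm hij) (Finset.mem_univ j)
  rw [h, Finset.sum_update_of_mem (Finset.mem_univ i), Finset.sdiff_singleton_eq_erase,
    Finset.sum_update_of_mem hj, Finset.sum_const, Finset.sdiff_singleton_eq_erase,
    Finset.card_erase_of_mem hj,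
    Finset.card_erase_of_mem (Finset.mem_univ i), Finset.card_univ, Fintype.card_fin,
    ← add_assoc]
  have : n - 1 - 1 = n - 2 := by omega
  rw [this]

end ZetaAux

/-- properties of the witness `ζ` of a perfect linear congruence `0_A`. -/
theorem zeta_properties {A : Type} [Finite A] {n : ℕ}
    (w : Op A n) (hidem : IsIdem w)
    (σs : Set (A × A))
    (hirr : IsIrred (alg1 w) (Set.diagonal A))
    (hmin : IsMinCover (alg1 w) (Set.diagonal A) σs)
    (p : ℕ) (hp : p.Prime) (ζ : Set (A × A × ZMod p))
    (hζ : Subalg3 (alg1 w) (alg1 w) (alg1 (zmodOp n p)) ζ)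
    (hproj : {q : A × A | ∃ c, (q.1, q.2, c) ∈ ζ} = σs)
    (hzero : ∀ a b (c : ZMod p), (a, b, c) ∈ ζ → (a = b ↔ c = 0)) :
    (∀ a b : A, (a, b) ∈ σs → ∃! c : ZMod p, (a, b, c) ∈ ζ) ∧
    (p ∣ n - 1) ∧
    (∀ a b : A, (a, b) ∈ σs →
      ∀ i : Fin n, w (Function.update (fun _ => a) i b) = b) ∧
    (∀ (a : A) (c : ZMod p) (b b' : A), (a, b, c) ∈ ζ → (a, b', c) ∈ ζ → b = b') ∧
    (∀ (b : A) (c : ZMod p) (a a' : A), (a, b, c) ∈ ζ → (a', b, c) ∈ ζ → a = a') ∧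
    (∀ (a b c : A) (d e : ZMod p), (a, b, d) ∈ ζ → (b, c, e) ∈ ζ → (a, c, d + e) ∈ ζ) := by
  classical
  haveI : Fact p.Prime := ⟨hp⟩
  haveI : NeZero p := ⟨hp.ne_zero⟩
  -- minimality of σs (stability w.r.t. the diagonal is trivial)
  have hK : ∀ δ : Set (A × A), Subalg2 (alg1 w) (alg1 w) δ → Set.diagonal A ⊂ δ → σs ⊆ δ := by
    intro δ hs hlt
    refine hmin.2 δ hs ?_ ?_ hlt
    · intro a b a' h1 h2
      have h3 : a = a' := h2
      exact h3 ▸ h1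
    · intro a b b' h1 h2
      have h3 : b = b' := h2
      exact h3 ▸ h1
  have hdiag : Set.diagonal A ⊆ σs := hmin.1.2.2.2.subset
  obtain ⟨q₀, hq₀, hq₀'⟩ := Set.exists_of_ssubset hmin.1.2.2.2
  obtain ⟨a₀, b₀⟩ := q₀
  have hne₀ : a₀ ≠ b₀ := fun h => hq₀' (Set.mem_diagonal_iff.mpr h)
  -- the algebra operation on ζ
  have hmix : ∀ (F1 F2 : Fin n → A) (F3 : Fin n → ZMod p),
      (∀ j, (F1 j, F2 j, F3 j) ∈ ζ) → (w F1, w F2, ∑ j, F3 j) ∈ ζ :=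
    fun F1 F2 F3 h => hζ () (fun j => (F1 j, F2 j, F3 j)) h
  have hmem : ∀ (a b : A) (c : ZMod p), (a, b, c) ∈ ζ → (a, b) ∈ σs := by
    intro a b c h
    rw [← hproj]
    exact ⟨c, h⟩
  have hex : ∀ a b : A, (a, b) ∈ σs → ∃ c, (a, b, c) ∈ ζ := by
    intro a b h
    rw [← hproj] at h
    exact h
  have hloop : ∀ x : A, (x, x, (0 : ZMod p)) ∈ ζ := by
    intro x
    obtain ⟨c, hc⟩ := hex x x (hdiag rfl)
    have : c = 0 := (hzero _ _ _ hc).mp rfl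
    exact this ▸ hc
  -- the arity is at least 2
  have hn2 : 2 ≤ n := by
    by_contra hlt
    have h01 : n = 0 ∨ n = 1 := by omega
    rcases h01 with h | h
    · subst h
      exact hne₀ ((hidem a₀).symm.trans
        ((congrArg w (funext fun i => i.elim0)).trans (hidem b₀)))
    · subst h
      have hone : ∀ g : Fin 1 → A, w g = g 0 := by
        intro g
        conv_lhs => rw [show g = (fun _ => g 0) from funext fun i => by rw [Fin.eq_zero i]]
        exact hidem (g 0)
      set δ : Set (A × A) := Set.diagonal A ∪ {(b₀, a₀)} with hδ
      have hsub : Subalg2 (alg1 w) (alg1 w) δ := by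
        intro s t ht
        have e1 : w (fun i => (t i).1) = (t ⟨0, Nat.zero_lt_one⟩).1 := hone _
        have e2 : w (fun i => (t i).2) = (t ⟨0, Nat.zero_lt_one⟩).2 := hone _
        show (w fun i => (t i).1, w fun i => (t i).2) ∈ δ
        rw [e1, e2, Prod.mk.eta]
        exact ht _
      have hblt : Set.diagonal A ⊂ δ := by
        refine (Set.ssubset_iff_of_subset Set.subset_union_left).mpr ⟨(b₀, a₀), ?_, ?_⟩
        · exact Set.mem_union_right _ rfl
        · exact fun h => hne₀ (Set.mem_diagonal_iff.mp h).symm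
      have := hK δ hsub hblt hq₀
      rcases this with h | h
      · exact hne₀ (Set.mem_diagonal_iff.mp h)
      · exact hne₀ (Prod.ext_iff.mp (Set.mem_singleton_iff.mp h)).1
  -- sums of labels on a fixed pair
  have hLsum : ∀ (a b : A) (f : Fin n → ZMod p),
      (∀ i, (a, b, f i) ∈ ζ) → (a, b, ∑ i, f i) ∈ ζ := by
    intro a b f hf
    have := hmix (fun _ => a) (fun _ => b) f hf
    rwa [hidem a, hidem b] at this
  -- uniqueness of labels
  have huniq : ∀ (a b : A) (c c' : ZMod p), (a, b, c) ∈ ζ → (a, b, c') ∈ ζ → c = c' := by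
    intro a b c c' hc hc'
    by_contra hne
    set i0 : Fin n := ⟨0, by omega⟩ with hi0
    set i1 : Fin n := ⟨1, by omega⟩ with hi1
    have hi : i0 ≠ i1 := Fin.ne_of_val_ne (by simp [hi0, hi1])
    set κ : ZMod p := ((n - 2 : ℕ) : ZMod p) * c with hκ
    have hadd2 : ∀ x y : ZMod p, (a, b, x) ∈ ζ → (a, b, y) ∈ ζ → (a, b, x + y + κ) ∈ ζ := by
      intro x y hx hy
      have hf : ∀ j : Fin n, (a, b, if j = i0 then x else if j = i1 then y else c) ∈ ζ := by
        intro j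
        split_ifs
        exacts [hx, hy, hc]
      have := hLsum a b _ hf
      rwa [sum_ite_two' i0 i1 hi x y c, nsmul_eq_mul, ← hκ] at this
    obtain ⟨c₁, hc₁ζ, hs⟩ : ∃ c₁, (a, b, c₁) ∈ ζ ∧ c₁ + κ ≠ 0 := by
      by_cases h0 : c + κ = 0
      · refine ⟨c', hc', fun h => hne ?_⟩
        exact (add_right_cancel (h.trans h0.symm)).symm
      · exact ⟨c, hc, h0⟩
    set s : ZMod p := c₁ + κ with hsdef
    have hiter : ∀ m : ℕ, (a, b, ((m : ZMod p) + 1) * s - κ) ∈ ζ := by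
      intro m
      induction m with
      | zero =>
        simpa [hsdef, add_sub_cancel_right] using hc₁ζ
      | succ m ih =>
        have h' := hadd2 _ _ ih hc₁ζ
        have e : (((m : ZMod p) + 1) * s - κ) + c₁ + κ = (((m + 1 : ℕ) : ZMod p) + 1) * s - κ := by
          rw [hsdef]; push_cast; ring
        rwa [e] at h'
    set t : ZMod p := κ * s⁻¹ - 1 with ht
    have hm : ((t.val : ℕ) : ZMod p) = t := ZMod.natCast_rightInverse t
    have hzl : (((t.val : ℕ) : ZMod p) + 1) * s - κ = 0 := by
      rw [hm, ht, sub_add_cancel, mul_assoc, inv_mul_cancel₀ hs, mul_one, sub_self]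
    have h0 := hiter t.val
    rw [hzl] at h0
    have hab : a = b := (hzero _ _ _ h0).mpr rfl
    subst hab
    have h1 : c = 0 := (hzero _ _ _ hc).mp rfl
    have h2 : c' = 0 := (hzero _ _ _ hc').mp rfl
    exact hne (h1.trans h2.symm)
  -- p divides n - 1
  obtain ⟨c₀, hc₀⟩ := hex a₀ b₀ hq₀
  have hc₀ne : c₀ ≠ 0 := fun h => hne₀ ((hzero _ _ _ hc₀).mpr h)
  have hnc : (a₀, b₀, (n : ZMod p) * c₀) ∈ ζ := by
    have := hLsum a₀ b₀ (fun _ => c₀) (fun _ => hc₀)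
    rwa [Finset.sum_const, Finset.card_univ, Fintype.card_fin, nsmul_eq_mul] at this
  have hn1 : (n : ZMod p) = 1 := by
    have h2 : ((n : ZMod p) - 1) * c₀ = 0 := by
      have := huniq _ _ _ _ hnc hc₀
      linear_combination this
    rcases mul_eq_zero.mp h2 with h | h
    · exact sub_eq_zero.mp h
    · exact absurd h hc₀ne
  have hsubcast : ((n - 1 : ℕ) : ZMod p) = 0 := by
    have h1 : (1 : ℕ) ≤ n := by omega
    push_cast [h1]
    rw [hn1]; ring
  have hdvd : p ∣ n - 1 := (ZMod.natCast_eq_zero_iff _ _).mp hsubcast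
  -- σs is symmetric
  have hsymm : ∀ x y : A, (x, y) ∈ σs → (y, x) ∈ σs := by
    set δ : Set (A × A) := {q | (q.2, q.1) ∈ σs} with hδ
    have hsub : Subalg2 (alg1 w) (alg1 w) δ := by
      intro s t ht
      exact hmin.1.1 s (fun i => ((t i).2, (t i).1)) ht
    have hblt : Set.diagonal A ⊂ δ := by
      have hss : Set.diagonal A ⊆ δ := by
        intro q hq
        have : q.1 = q.2 := hq
        show (q.2, q.1) ∈ σs
        exact hdiag (Set.mem_diagonal_iff.mpr this.symm)
      refine (Set.ssubset_iff_of_subset hss).mpr ⟨(b₀, a₀), hq₀, ?_⟩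
      exact fun h => hne₀ (Set.mem_diagonal_iff.mp h).symm
    have h := hK δ hsub hblt
    intro x y hxy
    exact h hxy
  -- statement (3)
  have h3 : ∀ a b : A, (a, b) ∈ σs → ∀ i : Fin n, w (Function.update (fun _ => a) i b) = b := by
    intro a b hab i
    obtain ⟨c, hc⟩ := hex a b hab
    have hf : ∀ j : Fin n,
        (Function.update (fun _ => a) i b j, b, if j = i then (0 : ZMod p) else c) ∈ ζ := by
      intro j
      by_cases h : j = i
      · subst h
        simp only [Function.update_self, if_pos rfl]
        exact hloop b
      · rw [Function.update_of_ne h, if_neg h]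
        exact hc
    have := hmix (Function.update (fun _ => a) i b) (fun _ => b) _ hf
    rw [hidem b] at this
    have hsum : (∑ j : Fin n, if j = i then (0 : ZMod p) else c) = 0 := by
      rw [sum_ite_one' i 0 c, nsmul_eq_mul, hsubcast, zero_mul, zero_add]
    rw [hsum] at this
    exact (hzero _ _ _ this).mpr rfl
  -- statement (6)
  have h6 : ∀ (a b c : A) (d e : ZMod p),
      (a, b, d) ∈ ζ → (b, c, e) ∈ ζ → (a, c, d + e) ∈ ζ := by
    intro a b c d e h1 h2
    have hba : (b, a) ∈ σs := hsymm _ _ (hmem _ _ _ h1)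
    have hbc : (b, c) ∈ σs := hmem _ _ _ h2
    set i0 : Fin n := ⟨0, by omega⟩ with hi0
    set i1 : Fin n := ⟨1, by omega⟩ with hi1
    have hi : i0 ≠ i1 := Fin.ne_of_val_ne (by simp [hi0, hi1])
    have hf : ∀ j : Fin n,
        (Function.update (fun _ => b) i0 a j, Function.update (fun _ => b) i1 c j,
          if j = i0 then d else if j = i1 then e else 0) ∈ ζ := by
      intro j
      by_cases hj0 : j = i0
      · subst hj0
        rw [Function.update_self, Function.update_of_ne hi, if_pos rfl]
        exact h1
      · by_cases hj1 : j = i1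
        · subst hj1
          rw [Function.update_of_ne hj0, Function.update_self, if_neg hj0, if_pos rfl]
          exact h2
        · rw [Function.update_of_ne hj0, Function.update_of_ne hj1, if_neg hj0, if_neg hj1]
          exact hloop b
    have := hmix _ _ _ hf
    rw [h3 b a hba i0, h3 b c hbc i1] at this
    have hsum : (∑ j : Fin n, if j = i0 then d else if j = i1 then e else (0 : ZMod p)) = d + e := by
      rw [sum_ite_two' i0 i1 hi d e 0, smul_zero, add_zero]
    rwa [hsum] at this
  -- inverse labels
  have hinv : ∀ (a b : A) (c : ZMod p), (a, b, c) ∈ ζ → (b, a, -c) ∈ ζ := by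
    intro a b c hc
    obtain ⟨c', hc'⟩ := hex b a (hsymm _ _ (hmem _ _ _ hc))
    have h0 := h6 b a b c' c hc' hc
    have he : c' + c = 0 := (hzero _ _ _ h0).mp rfl
    have : c' = -c := eq_neg_of_add_eq_zero_left he
    exact this ▸ hc'
  refine ⟨?_, hdvd, h3, ?_, ?_, h6⟩
  · intro a b hab
    obtain ⟨c, hc⟩ := hex a b hab
    exact ⟨c, hc, fun c' hc' => huniq a b c' c hc' hc⟩
  · intro a c b b' hb hb'
    have := h6 b a b' (-c) c (hinv a b c hb) hb'
    rw [neg_add_cancel] at this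
    exact (hzero _ _ _ this).mpr rfl
  · intro b c a a' ha ha'
    have := h6 a b a' c (-c) ha (hinv a' b c ha')
    rw [add_neg_cancel] at this
    exact (hzero _ _ _ this).mpr rfl


end ZhukPaper
end
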